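/- arXiv:1711.00076 — 4 statements merged into one kernel-verified Lean document; each statement's English description precedes it below -/
import Mathlib

section
/- (Reverse Cauchy–Schwarz inequality in Minkowski space.) For all x, y ∈ ℝ^{n+1} with x₀ ≥ |x̄| and y₀ ≥ |ȳ|, one has ⟨x, y⟩_L ≥ √Q(x) · √Q(y). -/
open scoped RealInnerProductSpace

/-- Reverse Cauchy–Schwarz inequality in Minkowski space:
for all `x, y ∈ ℝ^{n+1}` with `x₀ ≥ |x̄|` and `y₀ ≥ |ȳ|` one has
`⟨x, y⟩_L ≥ √Q(x) · √Q(y)`, where `Q(y) = y₀² − |ȳ|²` and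
`⟨x,y⟩_L = x₀ y₀ − x̄ ⬝ ȳ`. -/
theorem stmt_3 {n : ℕ} (hn : 1 ≤ n)
    (x y : ℝ × EuclideanSpace ℝ (Fin n))
    (hx : ‖x.2‖ ≤ x.1) (hy : ‖y.2‖ ≤ y.1) :
    Real.sqrt (x.1 ^ 2 - ‖x.2‖ ^ 2) * Real.sqrt (y.1 ^ 2 - ‖y.2‖ ^ 2) ≤
      x.1 * y.1 - ⟪x.2, y.2⟫ := by
  have hu : (0:ℝ) ≤ ‖x.2‖ := norm_nonneg _
  have hv : (0:ℝ) ≤ ‖y.2‖ := norm_nonneg _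
  have h1 : ⟪x.2, y.2⟫ ≤ ‖x.2‖ * ‖y.2‖ := real_inner_le_norm _ _
  have key : Real.sqrt (x.1 ^ 2 - ‖x.2‖ ^ 2) * Real.sqrt (y.1 ^ 2 - ‖y.2‖ ^ 2) ≤
      x.1 * y.1 - ‖x.2‖ * ‖y.2‖ := by
    rw [← Real.sqrt_mul (by nlinarith)]
    have h2 : (x.1 ^ 2 - ‖x.2‖ ^ 2) * (y.1 ^ 2 - ‖y.2‖ ^ 2) ≤
        (x.1 * y.1 - ‖x.2‖ * ‖y.2‖) ^ 2 := by nlinarith [sq_nonneg (x.1 * ‖y.2‖ - y.1 * ‖x.2‖)]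
    calc Real.sqrt ((x.1 ^ 2 - ‖x.2‖ ^ 2) * (y.1 ^ 2 - ‖y.2‖ ^ 2))
        ≤ Real.sqrt ((x.1 * y.1 - ‖x.2‖ * ‖y.2‖) ^ 2) := Real.sqrt_le_sqrt h2
      _ = x.1 * y.1 - ‖x.2‖ * ‖y.2‖ := Real.sqrt_sq (by nlinarith)
  linarith
end

section
/- Let C ⊆ ℝᵐ ∖ {0} be a cone, F : C → [0,∞), and let τ : ℝᵐ × ℝ → ℝ be C¹ with dτ_P(w) > 0 for every P ∈ ℝᵐ × ℝ and every w ∈ C^↓. Let U ⊆ ℝᵐ be open, c ∈ ℝ, and t : U → ℝ a C¹ function whose graph lies in the level set of τ, i.e. τ(p, t(p)) = c for all p ∈ U. Then t is strictly F-steep: dt_p(y) > F(y) for every p ∈ U and y ∈ C. -/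
/-!
Differentiating the identity `τ (q, t q) = c` along `y` gives `dτ_P (y, dt_p y) = 0` at
`P = (p, t p)`. If `dt_p y ≤ F y` for some `y ∈ C`, then `(y, dt_p y) ∈ C^↓`, so this
derivative would be positive.
-/

theorem fderiv_apply_graph_tangent_eq_zero {𝕜 E F G : Type*} [NontriviallyNormedField 𝕜]
    [NormedAddCommGroup E] [NormedSpace 𝕜 E] [NormedAddCommGroup F] [NormedSpace 𝕜 F]
    [NormedAddCommGroup G] [NormedSpace 𝕜 G] {τ : E × F → G} {t : E → F} {U : Set E}
    {p : E} {c : G} (hp : p ∈ U) (hU : UniqueDiffWithinAt 𝕜 U p)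
    (hτ : DifferentiableAt 𝕜 τ (p, t p)) (ht : DifferentiableWithinAt 𝕜 t U p)
    (hgraph : ∀ q ∈ U, τ (q, t q) = c) (y : E) :
    fderiv 𝕜 τ (p, t p) (y, fderivWithin 𝕜 t U p y) = 0 := by
  have hcomp : HasFDerivWithinAt (fun q => τ (q, t q))
      ((fderiv 𝕜 τ (p, t p)).comp ((ContinuousLinearMap.id 𝕜 E).prod (fderivWithin 𝕜 t U p)))
      U p :=
    hτ.hasFDerivAt.comp_hasFDerivWithinAt p
      ((hasFDerivWithinAt_id p U).prodMk ht.hasFDerivWithinAt)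
  have hconst : HasFDerivWithinAt (fun q => τ (q, t q)) (0 : E →L[𝕜] G) U p :=
    (hasFDerivWithinAt_const c p U).congr hgraph (hgraph p hp)
  simpa using congrArg (fun L : E →L[𝕜] G => L y) (hU.eq hcomp hconst)

theorem stmt_9_general {m : ℕ} (C : Set (EuclideanSpace ℝ (Fin m)))
    (F : EuclideanSpace ℝ (Fin m) → ℝ)
    (τ : EuclideanSpace ℝ (Fin m) × ℝ → ℝ) (hτ : ContDiff ℝ 1 τ)
    (hτpos : ∀ P : EuclideanSpace ℝ (Fin m) × ℝ,
      ∀ w ∈ ({w | w.1 ∈ C ∧ w.2 ≤ F w.1} ∪ {w | w.1 = 0 ∧ w.2 < 0} :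
        Set (EuclideanSpace ℝ (Fin m) × ℝ)), 0 < fderiv ℝ τ P w)
    (U : Set (EuclideanSpace ℝ (Fin m))) (hU : IsOpen U) (c : ℝ)
    (t : EuclideanSpace ℝ (Fin m) → ℝ) (ht : ContDiffOn ℝ 1 t U)
    (hgraph : ∀ p ∈ U, τ (p, t p) = c) :
    ∀ p ∈ U, ∀ y ∈ C, F y < fderivWithin ℝ t U p y := by
  intro p hp y hy
  have htangent := fderiv_apply_graph_tangent_eq_zero hp (hU.uniqueDiffWithinAt hp)
    (hτ.differentiable one_ne_zero _) (ht.differentiableOn one_ne_zero p hp) hgraph y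
  by_contra! hle
  have hpos := hτpos (p, t p) (y, fderivWithin ℝ t U p y) (Or.inl ⟨hy, hle⟩)
  exact hpos.ne' htangent

/-- Let `C ⊆ ℝᵐ ∖ {0}` be a cone, `F : C → [0,∞)`, and `τ : ℝᵐ × ℝ → ℝ` a
`C¹` function with `dτ_P(w) > 0` for every `P` and every `w ∈ C^↓`.  Let `U ⊆ ℝᵐ` be
open, `c ∈ ℝ`, and `t : U → ℝ` a `C¹` function whose graph lies in the level set
`τ = c`.  Then `t` is strictly `F`-steep: `dt_p(y) > F y` for every `p ∈ U`, `y ∈ C`. -/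
theorem stmt_9 {m : ℕ} (C : Set (EuclideanSpace ℝ (Fin m)))
    (hC0 : (0 : EuclideanSpace ℝ (Fin m)) ∉ C) (hCne : C.Nonempty)
    (hcone : ∀ y ∈ C, ∀ l : ℝ, 0 < l → l • y ∈ C)
    (F : EuclideanSpace ℝ (Fin m) → ℝ) (hFnn : ∀ y ∈ C, 0 ≤ F y)
    (τ : EuclideanSpace ℝ (Fin m) × ℝ → ℝ) (hτ : ContDiff ℝ 1 τ)
    (hτpos : ∀ P : EuclideanSpace ℝ (Fin m) × ℝ,
      ∀ w ∈ ({w | w.1 ∈ C ∧ w.2 ≤ F w.1} ∪ {w | w.1 = 0 ∧ w.2 < 0} :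
        Set (EuclideanSpace ℝ (Fin m) × ℝ)), 0 < fderiv ℝ τ P w)
    (U : Set (EuclideanSpace ℝ (Fin m))) (hU : IsOpen U) (c : ℝ)
    (t : EuclideanSpace ℝ (Fin m) → ℝ) (ht : ContDiffOn ℝ 1 t U)
    (hgraph : ∀ p ∈ U, τ (p, t p) = c) :
    ∀ p ∈ U, ∀ y ∈ C, F y < fderivWithin ℝ t U p y :=
  stmt_9_general C F τ hτ hτpos U hU c t ht hgraph
end

section
/- (Order representation in Minkowski spacetime.) Let p, q ∈ ℝ^{n+1} and suppose q − p does NOT lie in the closed future cone {y : y₀ ≥ |ȳ|}. Then there exists a linear (hence smooth) strictly √Q-steep function t : ℝ^{n+1} → ℝ (dt_x(y) > √Q(y) for every x and every y in the future causal cone C) with t(q) < t(p). -/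
/-!
Every `u` with `u₀ > 1 + ‖ū‖` is strictly steep, since `√Q(y) ≤ y₀` and
`u₀ y₀ - ⟪ū, ȳ⟫ ≥ (u₀ - ‖ū‖) y₀` on the causal cone. If `d = q - p` has `d₀ < ‖d̄‖`, the
vectors `u = (2 + k‖d̄‖, k d̄)` are of this kind for all `k ≥ 0`, and their Minkowski pairing
with `d` is `2 d₀ - k ‖d̄‖ (‖d̄‖ - d₀)`, which is negative for `k` large (already for `k = 0` when
`d₀ < 0`); this pairing is `t q - t p`.
-/

open scoped RealInnerProductSpace

lemma sqrt_sq_sub_sq_le_self {a b : ℝ} (ha : 0 ≤ a) : Real.sqrt (a ^ 2 - b ^ 2) ≤ a :=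
  Real.sqrt_le_iff.mpr ⟨ha, by nlinarith [sq_nonneg b]⟩

section MinkowskiSteep

variable {E : Type*} [NormedAddCommGroup E]

lemma fst_pos_of_ne_zero_of_norm_snd_le {y : ℝ × E} (hy : y ≠ 0) (hcausal : ‖y.2‖ ≤ y.1) :
    0 < y.1 := by
  refine lt_of_le_of_ne ((norm_nonneg _).trans hcausal) fun h ↦ hy (Prod.ext h.symm ?_)
  exact norm_le_zero_iff.mp (h ▸ hcausal)

variable [InnerProductSpace ℝ E]

lemma sub_norm_mul_le_minkowski {u y : ℝ × E} (hcausal : ‖y.2‖ ≤ y.1) :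
    (u.1 - ‖u.2‖) * y.1 ≤ u.1 * y.1 - ⟪u.2, y.2⟫ := by
  have hCS : ⟪u.2, y.2⟫ ≤ ‖u.2‖ * y.1 :=
    (real_inner_le_norm _ _).trans (mul_le_mul_of_nonneg_left hcausal (norm_nonneg _))
  linarith

lemma sqrt_lt_minkowski_of_one_add_norm_lt {u : ℝ × E} (hu : 1 + ‖u.2‖ < u.1)
    {y : ℝ × E} (hy : y ≠ 0) (hcausal : ‖y.2‖ ≤ y.1) :
    Real.sqrt (y.1 ^ 2 - ‖y.2‖ ^ 2) < u.1 * y.1 - ⟪u.2, y.2⟫ := by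
  have hy₀ := fst_pos_of_ne_zero_of_norm_snd_le hy hcausal
  calc Real.sqrt (y.1 ^ 2 - ‖y.2‖ ^ 2) ≤ y.1 := sqrt_sq_sub_sq_le_self hy₀.le
    _ < (u.1 - ‖u.2‖) * y.1 := by nlinarith
    _ ≤ u.1 * y.1 - ⟪u.2, y.2⟫ := sub_norm_mul_le_minkowski hcausal

lemma exists_one_add_norm_lt_minkowski_neg {d : ℝ × E} (hd : d.1 < ‖d.2‖) :
    ∃ u : ℝ × E, 1 + ‖u.2‖ < u.1 ∧ u.1 * d.1 - ⟪u.2, d.2⟫ < 0 := by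
  rcases lt_or_ge d.1 0 with hd₀ | hd₀
  · exact ⟨(2, 0), by simp, by simpa using mul_neg_of_pos_of_neg two_pos hd₀⟩
  set s := ‖d.2‖
  have hs : 0 < s := hd₀.trans_lt hd
  have hgap : 0 < s * (s - d.1) := mul_pos hs (by linarith)
  set k := (2 * d.1 + 1) / (s * (s - d.1))
  have hk : 0 ≤ k := by positivity
  refine ⟨(2 + k * s, k • d.2), ?_, ?_⟩
  · simp [norm_smul, abs_of_nonneg hk, s]
  · have hks : k * (s * (s - d.1)) = 2 * d.1 + 1 := div_mul_cancel₀ _ hgap.ne'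
    simp only [real_inner_smul_left, real_inner_self_eq_norm_sq]
    nlinarith

end MinkowskiSteep

theorem stmt_16_general {n : ℕ}
    (p q : ℝ × EuclideanSpace ℝ (Fin n))
    (hpq : ¬ ‖(q - p).2‖ ≤ (q - p).1) :
    ∃ u : ℝ × EuclideanSpace ℝ (Fin n),
      (∀ y : ℝ × EuclideanSpace ℝ (Fin n), y ≠ 0 → ‖y.2‖ ≤ y.1 →
        Real.sqrt (y.1 ^ 2 - ‖y.2‖ ^ 2) < u.1 * y.1 - ⟪u.2, y.2⟫) ∧
      u.1 * q.1 - ⟪u.2, q.2⟫ < u.1 * p.1 - ⟪u.2, p.2⟫ := by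
  obtain ⟨u, hu, hneg⟩ := exists_one_add_norm_lt_minkowski_neg (not_le.mp hpq)
  refine ⟨u, fun y hy hcausal ↦ sqrt_lt_minkowski_of_one_add_norm_lt hu hy hcausal, ?_⟩
  simp only [Prod.fst_sub, Prod.snd_sub, inner_sub_right] at hneg
  linarith

/-- order representation in Minkowski spacetime: if `q − p` does NOT lie
in the closed future cone `{y : y₀ ≥ |ȳ|}`, then there is a linear (hence smooth)
strictly `√Q`-steep function `t(x) = ⟨u, x⟩_L` (i.e. `⟨u, y⟩_L > √Q(y)` for every `y` in
the future causal cone `C = {y ≠ 0 : y₀ ≥ |ȳ|}`) with `t q < t p`. -/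
theorem stmt_16 {n : ℕ} (hn : 1 ≤ n)
    (p q : ℝ × EuclideanSpace ℝ (Fin n))
    (hpq : ¬ ‖(q - p).2‖ ≤ (q - p).1) :
    ∃ u : ℝ × EuclideanSpace ℝ (Fin n),
      (∀ y : ℝ × EuclideanSpace ℝ (Fin n), y ≠ 0 → ‖y.2‖ ≤ y.1 →
        Real.sqrt (y.1 ^ 2 - ‖y.2‖ ^ 2) < u.1 * y.1 - ⟪u.2, y.2⟫) ∧
      u.1 * q.1 - ⟪u.2, q.2⟫ < u.1 * p.1 - ⟪u.2, p.2⟫ :=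
  stmt_16_general p q hpq
end

section
/- (Easy direction of the distance formula.) Let C ⊆ ℝᵐ ∖ {0} be a cone and F : C ∪ {0} → [0,∞) continuous with F(0) = 0. Then for every C¹ F-steep function f : ℝᵐ → ℝ (df_x(y) ≥ F(y) for all x and all y ∈ C) and all p, q ∈ ℝᵐ, one has d(p, q) ≤ max(f(q) − f(p), 0); consequently d(p,q) ≤ inf over all C¹ F-steep f of [f(q) − f(p)]⁺. -/
open MeasureTheory

/-- A (continuous) causal curve from `p` to `q` parametrized on `[0,1]`: a Lipschitz curve
with almost-everywhere derivative in `C ∪ {0}`.  (Lipschitz curves in `ℝᵐ` are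
differentiable almost everywhere, and Lean's `deriv` has junk value `0 ∈ C ∪ {0}`
at points of non-differentiability.) -/
def IsCausalCurve {m : ℕ} (C : Set (EuclideanSpace ℝ (Fin m)))
    (p q : EuclideanSpace ℝ (Fin m)) (x : ℝ → EuclideanSpace ℝ (Fin m)) : Prop :=
  (∃ K : NNReal, LipschitzOnWith K x (Set.Icc 0 1)) ∧ x 0 = p ∧ x 1 = q ∧
    ∀ᵐ t ∂volume, t ∈ Set.Icc (0 : ℝ) 1 → deriv x t ∈ C ∪ {0}

/-- The `F`-length `ℓ(x) = ∫ F(x′(t)) dt` of a curve parametrized on `[0,1]`. -/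
noncomputable def FLength {m : ℕ} (F : EuclideanSpace ℝ (Fin m) → ℝ)
    (x : ℝ → EuclideanSpace ℝ (Fin m)) : ENNReal :=
  ∫⁻ t in Set.Icc (0 : ℝ) 1, ENNReal.ofReal (F (deriv x t))

/-- The Lorentz–Finsler distance `d(p,q) = sup { ℓ(x) : x causal curve from p to q }`,
valued in `[0,∞]`, with `sup ∅ = 0`. -/
noncomputable def FLdist {m : ℕ} (C : Set (EuclideanSpace ℝ (Fin m)))
    (F : EuclideanSpace ℝ (Fin m) → ℝ) (p q : EuclideanSpace ℝ (Fin m)) : ENNReal :=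
  ⨆ x ∈ {x : ℝ → EuclideanSpace ℝ (Fin m) | IsCausalCurve C p q x}, FLength F x

/-! Along a causal curve `x` the function `t ↦ f (x t)` is Lipschitz, hence absolutely
continuous, and wherever `x` is differentiable (almost everywhere, by Rademacher) steepness
gives `F (x' t) ≤ (f ∘ x)' t` (for `x' t = 0` both sides vanish). Since `F ≥ 0`, integrating
and using the fundamental theorem of calculus for absolutely continuous functions bounds the
`F`-length of `x` by `f q - f p`. -/

open Set

theorem ContDiff.exists_lipschitzOnWith_comp {E F α : Type*} [NormedAddCommGroup E]
    [NormedSpace ℝ E] [NormedAddCommGroup F] [NormedSpace ℝ F] [PseudoMetricSpace α]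
    {f : E → F} (hf : ContDiff ℝ 1 f) {x : α → E} {s : Set α} {K : NNReal}
    (hx : LipschitzOnWith K x s) (hs : IsCompact s) :
    ∃ K', LipschitzOnWith K' (f ∘ x) s := by
  obtain ⟨K', hK'⟩ := hf.locallyLipschitz.locallyLipschitzOn.exists_lipschitzOnWith_of_compact
    (hs.image_of_continuousOn hx.continuousOn)
  exact ⟨K' * K, hK'.comp hx (mapsTo_image x s)⟩

theorem LipschitzOnWith.ae_differentiableAt_of_isOpen {E F : Type*} [NormedAddCommGroup E]
    [NormedSpace ℝ E] [FiniteDimensional ℝ E] [MeasurableSpace E] [BorelSpace E]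
    [NormedAddCommGroup F] [NormedSpace ℝ F] [FiniteDimensional ℝ F]
    {μ : Measure E} [μ.IsAddHaarMeasure] {f : E → F} {s : Set E} {K : NNReal}
    (hf : LipschitzOnWith K f s) (hs : IsOpen s) :
    ∀ᵐ x ∂μ, x ∈ s → DifferentiableAt ℝ f x := by
  filter_upwards [hf.ae_differentiableWithinAt_of_mem] with x hx hxs
  exact (hx hxs).differentiableAt (hs.mem_nhds hxs)

theorem le_deriv_comp_of_steep {E : Type*} [NormedAddCommGroup E] [NormedSpace ℝ E]
    {C : Set E} {F f : E → ℝ} {x : ℝ → E} {t : ℝ} (hF0 : F 0 = 0)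
    (hsteep : ∀ y ∈ C, F y ≤ fderiv ℝ f (x t) y) (hf : DifferentiableAt ℝ f (x t))
    (hx : DifferentiableAt ℝ x t) (hxC : deriv x t ∈ C ∪ {0}) :
    F (deriv x t) ≤ deriv (f ∘ x) t := by
  rw [(hf.hasFDerivAt.comp_hasDerivAt t hx.hasDerivAt).deriv]
  rcases hxC with hxC | hxC
  · exact hsteep _ hxC
  · rw [mem_singleton_iff.mp hxC, map_zero, hF0]

theorem FLength_le_of_steep {m : ℕ} {C : Set (EuclideanSpace ℝ (Fin m))}
    {F f : EuclideanSpace ℝ (Fin m) → ℝ} {p q : EuclideanSpace ℝ (Fin m)}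
    {x : ℝ → EuclideanSpace ℝ (Fin m)} (hF0 : F 0 = 0) (hFnn : ∀ y ∈ C ∪ {0}, 0 ≤ F y)
    (hf : ContDiff ℝ 1 f) (hsteep : ∀ z, ∀ y ∈ C, F y ≤ fderiv ℝ f z y)
    (hx : IsCausalCurve C p q x) :
    FLength F x ≤ ENNReal.ofReal (f q - f p) := by
  obtain ⟨⟨K, hxK⟩, rfl, rfl, hxC⟩ := hx
  obtain ⟨K', hK'⟩ := hf.exists_lipschitzOnWith_comp hxK isCompact_Icc
  have hAC : AbsolutelyContinuousOnInterval (f ∘ x) 0 1 :=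
    LipschitzOnWith.absolutelyContinuousOnInterval (by rwa [uIcc_of_le zero_le_one])
  have hle : ∀ᵐ t ∂volume.restrict (Ioo (0 : ℝ) 1),
      F (deriv x t) ≤ deriv (f ∘ x) t ∧ 0 ≤ F (deriv x t) := by
    rw [ae_restrict_iff' measurableSet_Ioo]
    filter_upwards [(hxK.mono Ioo_subset_Icc_self).ae_differentiableAt_of_isOpen isOpen_Ioo,
      hxC] with t hdiff hC ht
    have hC := hC (Ioo_subset_Icc_self ht)
    exact ⟨le_deriv_comp_of_steep hF0 (hsteep (x t)) (hf.differentiable one_ne_zero _)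
      (hdiff ht) hC, hFnn _ hC⟩
  have hint : IntegrableOn (deriv (f ∘ x)) (Ioo 0 1) :=
    hAC.intervalIntegrable_deriv.1.mono_set Ioo_subset_Ioc_self
  calc FLength F x = ∫⁻ t in Ioo 0 1, ENNReal.ofReal (F (deriv x t)) := by
        rw [FLength, Measure.restrict_congr_set Ioo_ae_eq_Icc]
    _ ≤ ∫⁻ t in Ioo 0 1, ENNReal.ofReal (deriv (f ∘ x) t) :=
        lintegral_mono_ae (hle.mono fun t ht => ENNReal.ofReal_le_ofReal ht.1)
    _ = ENNReal.ofReal (∫ t in Ioo 0 1, deriv (f ∘ x) t) :=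
        (ofReal_integral_eq_lintegral_ofReal hint (hle.mono fun t ht => ht.2.trans ht.1)).symm
    _ = ENNReal.ofReal (f (x 1) - f (x 0)) := by
        rw [← integral_Ioc_eq_integral_Ioo, ← intervalIntegral.integral_of_le zero_le_one,
          hAC.integral_deriv_eq_sub, Function.comp_apply, Function.comp_apply]

theorem stmt_19_general {m : ℕ} (C : Set (EuclideanSpace ℝ (Fin m)))
    (F : EuclideanSpace ℝ (Fin m) → ℝ)
    (hF0 : F 0 = 0)
    (hFnn : ∀ y ∈ C ∪ {0}, 0 ≤ F y)
    (p q : EuclideanSpace ℝ (Fin m)) :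
    (∀ f : EuclideanSpace ℝ (Fin m) → ℝ, ContDiff ℝ 1 f →
      (∀ x : EuclideanSpace ℝ (Fin m), ∀ y ∈ C, F y ≤ fderiv ℝ f x y) →
      FLdist C F p q ≤ ENNReal.ofReal (max (f q - f p) 0)) ∧
    FLdist C F p q ≤
      ⨅ f ∈ {f : EuclideanSpace ℝ (Fin m) → ℝ | ContDiff ℝ 1 f ∧
        ∀ x : EuclideanSpace ℝ (Fin m), ∀ y ∈ C, F y ≤ fderiv ℝ f x y},
        ENNReal.ofReal (max (f q - f p) 0) := by
  have hbound : ∀ f : EuclideanSpace ℝ (Fin m) → ℝ, ContDiff ℝ 1 f →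
      (∀ x : EuclideanSpace ℝ (Fin m), ∀ y ∈ C, F y ≤ fderiv ℝ f x y) →
      FLdist C F p q ≤ ENNReal.ofReal (max (f q - f p) 0) := fun f hf hsteep =>
    iSup₂_le fun _ hx => (FLength_le_of_steep hF0 hFnn hf hsteep hx).trans
      (ENNReal.ofReal_le_ofReal (le_max_left _ _))
  exact ⟨hbound, le_iInf₂ fun f hf => hbound f hf.1 hf.2⟩

/-- easy direction of the distance formula: Let `C ⊆ ℝᵐ ∖ {0}` be a cone
and `F : C ∪ {0} → [0,∞)` continuous with `F 0 = 0`.  Then for every `C¹` `F`-steep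
function `f` (`df_x(y) ≥ F y` for all `x` and all `y ∈ C`) and all `p, q`, one has
`d(p,q) ≤ [f q − f p]⁺`; consequently `d(p,q) ≤ inf` over all `C¹` `F`-steep `f` of
`[f q − f p]⁺`. -/
theorem stmt_19 {m : ℕ} (C : Set (EuclideanSpace ℝ (Fin m)))
    (hC0 : (0 : EuclideanSpace ℝ (Fin m)) ∉ C) (hCne : C.Nonempty)
    (hcone : ∀ y ∈ C, ∀ l : ℝ, 0 < l → l • y ∈ C)
    (F : EuclideanSpace ℝ (Fin m) → ℝ)
    (hFc : ContinuousOn F (C ∪ {0})) (hF0 : F 0 = 0)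
    (hFnn : ∀ y ∈ C ∪ {0}, 0 ≤ F y)
    (p q : EuclideanSpace ℝ (Fin m)) :
    (∀ f : EuclideanSpace ℝ (Fin m) → ℝ, ContDiff ℝ 1 f →
      (∀ x : EuclideanSpace ℝ (Fin m), ∀ y ∈ C, F y ≤ fderiv ℝ f x y) →
      FLdist C F p q ≤ ENNReal.ofReal (max (f q - f p) 0)) ∧
    FLdist C F p q ≤
      ⨅ f ∈ {f : EuclideanSpace ℝ (Fin m) → ℝ | ContDiff ℝ 1 f ∧
        ∀ x : EuclideanSpace ℝ (Fin m), ∀ y ∈ C, F y ≤ fderiv ℝ f x y},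
        ENNReal.ofReal (max (f q - f p) 0) :=
  stmt_19_general C F hF0 hFnn p q
end
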